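/- arXiv:2111.06269 — 9 statements merged into one kernel-verified Lean document; each statement's English description precedes it below -/
import Mathlib

section
/- Let ε_∞, ω_p, ω₀ be positive real numbers and let ε₀ be a complex number with Re ε₀ > ε_∞ and Im ε₀ > 0. Let λ ∈ (0,1]. If ω > 0 and γ > 0 satisfy the dispersion equation (1−λ)ε₀ + λ·ε_∞·(1 + ω_p²/(ω₀² − ω² + iγω)) = 0, then ω² = ω₀² + ω_p²·λ·ε_∞·((1−λ)·Re ε₀ + λ·ε_∞) / |(1−λ)ε₀ + λ·ε_∞|². -/
/-- If `(ω, γ)` (both positive) solves the Lorentz dispersion equation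
`(1−λ)ε₀ + λ ε_∞ (1 + ω_p²/(ω₀² − ω² + iγω)) = 0`, then
`ω² = ω₀² + ω_p² λ ε_∞ ((1−λ) Re ε₀ + λ ε_∞)/|(1−λ)ε₀ + λ ε_∞|²`. -/
theorem stmt0 (ε_inf ω_p ω₀ : ℝ) (hεinf : 0 < ε_inf) (hωp : 0 < ω_p) (hω₀ : 0 < ω₀)
    (ε₀ : ℂ) (hre : ε_inf < ε₀.re) (him : 0 < ε₀.im)
    (lam : ℝ) (hlam : lam ∈ Set.Ioc (0 : ℝ) 1)
    (ω γ : ℝ) (hω : 0 < ω) (hγ : 0 < γ)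
    (hdisp : (1 - (lam : ℂ)) * ε₀ + (lam : ℂ) * (ε_inf : ℂ) *
      (1 + (ω_p : ℂ) ^ 2 / ((ω₀ : ℂ) ^ 2 - (ω : ℂ) ^ 2 + Complex.I * (γ : ℂ) * (ω : ℂ))) = 0) :
    ω ^ 2 = ω₀ ^ 2 + ω_p ^ 2 * lam * ε_inf * ((1 - lam) * ε₀.re + lam * ε_inf) /
      (‖(1 - (lam : ℂ)) * ε₀ + (lam : ℂ) * (ε_inf : ℂ)‖) ^ 2 := by
  obtain ⟨hlam0, hlam1⟩ := hlam
  set A : ℂ := (1 - (lam : ℂ)) * ε₀ + (lam : ℂ) * (ε_inf : ℂ) with hA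
  set D : ℂ := (ω₀ : ℂ) ^ 2 - (ω : ℂ) ^ 2 + Complex.I * (γ : ℂ) * (ω : ℂ) with hDdef
  have hAre : A.re = (1 - lam) * ε₀.re + lam * ε_inf := by
    rw [hA]
    simp [Complex.add_re, Complex.mul_re]
  have hArepos : 0 < A.re := by
    rw [hAre]
    have h1 : 0 ≤ 1 - lam := by linarith
    nlinarith
  have hAne : A ≠ 0 := by
    intro h; rw [h] at hArepos; simp at hArepos
  have hDim : D.im = γ * ω := by
    rw [hDdef]; simp [← Complex.ofReal_pow]
  have hDre : D.re = ω₀ ^ 2 - ω ^ 2 := by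
    rw [hDdef]; simp [← Complex.ofReal_pow]
  have hDne : D ≠ 0 := by
    intro h
    have : D.im = 0 := by rw [h]; simp
    rw [hDim] at this; nlinarith
  have key : A * D = -((lam : ℂ) * ε_inf * ω_p ^ 2) := by
    have h1 : (1 - (lam : ℂ)) * ε₀ + (lam : ℂ) * (ε_inf : ℂ) *
        (1 + (ω_p : ℂ) ^ 2 / D) = 0 := hdisp
    field_simp at h1
    rw [hA]; ring_nf; ring_nf at h1; linear_combination h1
  have hDeq : D = (((-(lam * ε_inf * ω_p ^ 2)) : ℝ) : ℂ) / A := by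
    rw [eq_div_iff hAne]
    push_cast
    linear_combination key
  have hre' : D.re = -(lam * ε_inf * ω_p ^ 2) * A.re / Complex.normSq A := by
    rw [hDeq, Complex.div_re, Complex.ofReal_re, Complex.ofReal_im]
    ring
  rw [hDre, Complex.normSq_eq_norm_sq] at hre'
  have hNpos : 0 < (‖A‖) ^ 2 := pow_pos (norm_pos_iff.mpr hAne) 2
  rw [← hAre]
  field_simp
  field_simp at hre'
  linear_combination -hre'
end

section
/- Let ε_∞, ω_p, ω₀ be positive real numbers and let ε₀ be a complex number with Re ε₀ > ε_∞ and Im ε₀ > 0. Let λ ∈ (0,1]. If ω > 0 and γ > 0 satisfy (1−λ)ε₀ + λ·ε_∞·(1 + ω_p²/(ω₀² − ω² + iγω)) = 0, then ω₀ < ω and ω² < ω₀² + ω_p². -/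
/-- If `(ω, γ)` (both positive) solves the Lorentz dispersion equation, then
`ω₀ < ω` and `ω² < ω₀² + ω_p²`. -/
theorem stmt2 (ε_inf ω_p ω₀ : ℝ) (hεinf : 0 < ε_inf) (hωp : 0 < ω_p) (hω₀ : 0 < ω₀)
    (ε₀ : ℂ) (hre : ε_inf < ε₀.re) (him : 0 < ε₀.im)
    (lam : ℝ) (hlam : lam ∈ Set.Ioc (0 : ℝ) 1)
    (ω γ : ℝ) (hω : 0 < ω) (hγ : 0 < γ)
    (hdisp : (1 - (lam : ℂ)) * ε₀ + (lam : ℂ) * (ε_inf : ℂ) *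
      (1 + (ω_p : ℂ) ^ 2 / ((ω₀ : ℂ) ^ 2 - (ω : ℂ) ^ 2 + Complex.I * (γ : ℂ) * (ω : ℂ))) = 0) :
    ω₀ < ω ∧ ω ^ 2 < ω₀ ^ 2 + ω_p ^ 2 := by
  obtain ⟨hlam0, hlam1⟩ := hlam
  have hD : ((ω₀ : ℂ) ^ 2 - (ω : ℂ) ^ 2 + Complex.I * (γ : ℂ) * (ω : ℂ)) ≠ 0 := by
    intro h
    have h2 := congrArg Complex.im h
    simp [Complex.add_im, Complex.sub_im, Complex.mul_im, Complex.I_re, Complex.I_im,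
      Complex.ofReal_re, Complex.ofReal_im, pow_two] at h2
    rcases h2 with h2 | h2 <;> linarith
  have key : ((1 - (lam : ℂ)) * ε₀ + (lam : ℂ) * ε_inf) *
      ((ω₀ : ℂ) ^ 2 - (ω : ℂ) ^ 2 + Complex.I * (γ : ℂ) * (ω : ℂ))
      + (lam : ℂ) * ε_inf * ω_p ^ 2 = 0 := by
    field_simp [hD] at hdisp
    linear_combination ((ω₀ : ℂ) ^ 2 - (ω : ℂ) ^ 2 + Complex.I * (γ : ℂ) * (ω : ℂ)) * hdisp
      - (lam : ℂ) * ε_inf * ω_p ^ 2 * mul_inv_cancel₀ hD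
  have hR := congrArg Complex.re key
  have hI := congrArg Complex.im key
  simp [Complex.add_re, Complex.add_im, Complex.sub_re, Complex.sub_im,
    Complex.mul_re, Complex.mul_im, Complex.I_re, Complex.I_im,
    Complex.ofReal_re, Complex.ofReal_im, Complex.one_re, Complex.one_im, pow_two] at hR hI
  have ha : 0 < (1 - lam) * ε₀.re + lam * ε_inf := by nlinarith
  have hb : 0 ≤ (1 - lam) * ε₀.im := by nlinarith
  have h1 : 0 ≤ (1 - lam) * ε₀.re := by nlinarith
  have he : 0 < γ * ω := mul_pos hγ hω
  have hd : ω₀ ^ 2 - ω ^ 2 < 0 := by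
    rcases lt_or_eq_of_le hb with hb' | hb'
    · nlinarith
    · exfalso; nlinarith
  have hbpos : 0 < (1 - lam) * ε₀.im := by
    rcases lt_or_eq_of_le hb with hb' | hb'
    · exact hb'
    · exfalso; nlinarith
  have hd2 : 0 < ω₀ * ω₀ - ω * ω + ω_p * ω_p := by
    by_contra hcon
    push_neg at hcon
    have hcon' : 0 ≤ -(ω₀ * ω₀ - ω * ω + ω_p * ω_p) := by linarith
    nlinarith [mul_pos hbpos he, mul_nonneg h1 (mul_nonneg hωp.le hωp.le),
      mul_nonneg ha.le hcon']
  constructor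
  · nlinarith
  · nlinarith
end

section
/- Let ε_∞, ω_p, ω₀ be positive real numbers and let ε₀ be a complex number with Re ε₀ > ε_∞ and Im ε₀ > 0. Let λ ∈ (0,1]. If ω > 0 and γ > 0 satisfy (1−λ)ε₀ + λ·ε_∞·(1 + ω_p²/(ω₀² − ω² + iγω)) = 0, then γ < √(ω₀² + ω_p²) · (Im ε₀ / Re ε₀). -/
set_option maxHeartbeats 1000000


/-- If `(ω, γ)` (both positive) solves the Lorentz dispersion equation, then
`γ < √(ω₀² + ω_p²) · (Im ε₀ / Re ε₀)`. -/
theorem stmt3 (ε_inf ω_p ω₀ : ℝ) (hεinf : 0 < ε_inf) (hωp : 0 < ω_p) (hω₀ : 0 < ω₀)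
    (ε₀ : ℂ) (hre : ε_inf < ε₀.re) (him : 0 < ε₀.im)
    (lam : ℝ) (hlam : lam ∈ Set.Ioc (0 : ℝ) 1)
    (ω γ : ℝ) (hω : 0 < ω) (hγ : 0 < γ)
    (hdisp : (1 - (lam : ℂ)) * ε₀ + (lam : ℂ) * (ε_inf : ℂ) *
      (1 + (ω_p : ℂ) ^ 2 / ((ω₀ : ℂ) ^ 2 - (ω : ℂ) ^ 2 + Complex.I * (γ : ℂ) * (ω : ℂ))) = 0) :
    γ < Real.sqrt (ω₀ ^ 2 + ω_p ^ 2) * (ε₀.im / ε₀.re) := by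
  obtain ⟨hlam0, hlam1⟩ := hlam
  set D : ℂ := (ω₀ : ℂ) ^ 2 - (ω : ℂ) ^ 2 + Complex.I * (γ : ℂ) * (ω : ℂ) with hDdef
  have hDim : D.im = γ * ω := by
    simp [hDdef, pow_two, Complex.add_im, Complex.sub_im, Complex.mul_im, Complex.mul_re]
  have hDne : D ≠ 0 := by
    intro h
    have h2 : D.im = 0 := by rw [h]; simp
    rw [hDim] at h2
    nlinarith
  have key : ((1 - (lam:ℂ)) * ε₀ + (lam:ℂ)*(ε_inf:ℂ)) * D + (lam:ℂ)*(ε_inf:ℂ)*(ω_p:ℂ)^2 = 0 := by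
    have h := hdisp
    field_simp at h
    linear_combination h
  have E1 : ((1 - lam) * ε₀.re + lam * ε_inf) * (ω₀^2 - ω^2)
      - ((1 - lam) * ε₀.im) * (γ * ω) + lam * ε_inf * ω_p^2 = 0 := by
    have h := congrArg Complex.re key
    simp only [hDdef, pow_two, Complex.add_re, Complex.sub_re, Complex.mul_re, Complex.mul_im,
      Complex.add_im, Complex.sub_im, Complex.I_re, Complex.I_im, Complex.ofReal_re,
      Complex.ofReal_im, Complex.one_re, Complex.one_im, Complex.zero_re] at h
    linear_combination h
  have E2 : ((1 - lam) * ε₀.re + lam * ε_inf) * (γ * ω)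
      + ((1 - lam) * ε₀.im) * (ω₀^2 - ω^2) = 0 := by
    have h := congrArg Complex.im key
    simp only [hDdef, pow_two, Complex.add_re, Complex.sub_re, Complex.mul_re, Complex.mul_im,
      Complex.add_im, Complex.sub_im, Complex.I_re, Complex.I_im, Complex.ofReal_re,
      Complex.ofReal_im, Complex.one_re, Complex.one_im, Complex.zero_im] at h
    linear_combination h
  set a : ℝ := (1 - lam) * ε₀.re + lam * ε_inf with hadef
  set b : ℝ := (1 - lam) * ε₀.im with hbdef
  set d : ℝ := ω₀^2 - ω^2 with hddef
  set e : ℝ := γ * ω with hedef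
  set c : ℝ := lam * ε_inf * ω_p^2 with hcdef
  clear_value a b d e c
  have ha0 : 0 < a := by
    rw [hadef]
    nlinarith [mul_nonneg (show (0:ℝ) ≤ 1 - lam by linarith) (show (0:ℝ) ≤ ε₀.re by nlinarith),
      mul_pos hlam0 hεinf]
  have hb0 : 0 ≤ b := by rw [hbdef]; exact mul_nonneg (by linarith) him.le
  have he0 : 0 < e := by rw [hedef]; exact mul_pos hγ hω
  have hc0 : 0 < c := by rw [hcdef]; positivity
  have hb : 0 < b := by
    rcases lt_or_eq_of_le hb0 with h | h
    · exact h
    · exfalso; rw [← h] at E2; nlinarith [mul_pos ha0 he0]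
  have hlamlt : lam < 1 := by
    by_contra hcon
    push_neg at hcon
    rw [hbdef] at hb
    nlinarith
  have hlea : lam * ε_inf < a := by
    rw [hadef]
    nlinarith [mul_pos (show (0:ℝ) < 1 - lam by linarith) (show (0:ℝ) < ε₀.re by nlinarith)]
  have hd : d < 0 := by
    by_contra hcon
    push_neg at hcon
    linarith [mul_nonneg hb.le hcon, mul_pos ha0 he0]
  have hid : (-d) * (a^2 + b^2) = a * c := by linear_combination (-a) * E1 + (-b) * E2
  have hdlt : -d < ω_p ^ 2 := by
    have h' : (-d) * (a^2 + b^2) < ω_p^2 * (a^2 + b^2) := by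
      rw [hid, hcdef]
      nlinarith [mul_lt_mul_of_pos_left hlea (mul_pos ha0 (pow_pos hωp 2)),
        mul_pos (mul_pos hb hb) (pow_pos hωp 2)]
    exact lt_of_mul_lt_mul_right h' (by positivity)
  have hωsq : ω ^ 2 < ω₀ ^ 2 + ω_p ^ 2 := by
    rw [hddef] at hdlt; nlinarith
  have hωlt : ω < Real.sqrt (ω₀ ^ 2 + ω_p ^ 2) :=
    (Real.lt_sqrt hω.le).mpr hωsq
  have hs0 : 0 < Real.sqrt (ω₀ ^ 2 + ω_p ^ 2) := lt_trans hω hωlt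
  have hR0 : 0 < ε₀.re := lt_trans hεinf hre
  have hbRaI : b * ε₀.re < a * ε₀.im := by
    rw [hadef, hbdef]; nlinarith [mul_pos (mul_pos hlam0 hεinf) him]
  have hkey : γ * a * ω = (-d) * b := by linear_combination E2 - a * hedef
  have hd2 : -d < ω ^ 2 := by rw [hddef]; nlinarith
  have hfin : γ * ε₀.re < Real.sqrt (ω₀ ^ 2 + ω_p ^ 2) * ε₀.im := by
    have hkeyR : γ * ε₀.re * (a * ω) = (-d) * (b * ε₀.re) := by
      linear_combination ε₀.re * hkey
    have h1 : γ * ε₀.re * (a * ω) < Real.sqrt (ω₀ ^ 2 + ω_p ^ 2) * ε₀.im * (a * ω) := by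
      nlinarith [mul_lt_mul_of_pos_left hbRaI (show (0:ℝ) < -d by linarith),
        mul_lt_mul_of_pos_right hd2 (mul_pos ha0 him),
        mul_lt_mul_of_pos_right hωlt (show (0:ℝ) < ω * (a * ε₀.im) by positivity)]
    exact lt_of_mul_lt_mul_right h1 (mul_pos ha0 hω).le
  rw [← mul_div_assoc]
  exact (lt_div_iff₀ hR0).mpr hfin
end

section
/- Let ε_∞, ω_p, ω₀ be positive real numbers and let ε₀ be a complex number with Re ε₀ > ε_∞ and Im ε₀ > 0. Let λ ∈ (0,1). Set D := (1−λ)ε₀ + λ·ε_∞, A := (1−λ)·Re ε₀ + λ·ε_∞, ω* := √(ω₀² + ω_p²·λ·ε_∞·A/|D|²) and γ* := ω_p²·λ·ε_∞·(1−λ)·Im ε₀ / (ω*·|D|²). Then ω* > 0, γ* > 0, the pair (ω*, γ*) satisfies (1−λ)ε₀ + λ·ε_∞·(1 + ω_p²/(ω₀² − ω*² + iγ*ω*)) = 0, and moreover (ω*, γ*) is the ONLY pair of positive reals (ω, γ) satisfying this dispersion equation. -/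
/-- Existence and uniqueness of the positive solution `(ω*, γ*)` of the Lorentz
dispersion equation `(1−λ)ε₀ + λ ε_∞ (1 + ω_p²/(ω₀² − ω² + iγω)) = 0`. -/
theorem stmt4 (ε_inf ω_p ω₀ : ℝ) (hεinf : 0 < ε_inf) (hωp : 0 < ω_p) (hω₀ : 0 < ω₀)
    (ε₀ : ℂ) (hre : ε_inf < ε₀.re) (him : 0 < ε₀.im)
    (lam : ℝ) (hlam : lam ∈ Set.Ioo (0 : ℝ) 1)
    (A : ℝ) (hA : A = (1 - lam) * ε₀.re + lam * ε_inf)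
    (Dabs2 : ℝ) (hDabs2 : Dabs2 = ‖(1 - (lam : ℂ)) * ε₀ + (lam : ℂ) * (ε_inf : ℂ)‖ ^ 2)
    (ωs : ℝ) (hωs : ωs = Real.sqrt (ω₀ ^ 2 + ω_p ^ 2 * lam * ε_inf * A / Dabs2))
    (γs : ℝ) (hγs : γs = ω_p ^ 2 * lam * ε_inf * (1 - lam) * ε₀.im / (ωs * Dabs2)) :
    0 < ωs ∧ 0 < γs ∧
    ((1 - (lam : ℂ)) * ε₀ + (lam : ℂ) * (ε_inf : ℂ) *
      (1 + (ω_p : ℂ) ^ 2 / ((ω₀ : ℂ) ^ 2 - (ωs : ℂ) ^ 2 + Complex.I * (γs : ℂ) * (ωs : ℂ))) = 0) ∧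
    (∀ ω γ : ℝ, 0 < ω → 0 < γ →
      (1 - (lam : ℂ)) * ε₀ + (lam : ℂ) * (ε_inf : ℂ) *
        (1 + (ω_p : ℂ) ^ 2 / ((ω₀ : ℂ) ^ 2 - (ω : ℂ) ^ 2 + Complex.I * (γ : ℂ) * (ω : ℂ))) = 0 →
      ω = ωs ∧ γ = γs) := by
  obtain ⟨hlam0, hlam1⟩ := hlam
  set Dc : ℂ := (1 - (lam : ℂ)) * ε₀ + (lam : ℂ) * (ε_inf : ℂ) with hDc
  set K : ℝ := ω_p ^ 2 * lam * ε_inf with hK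
  have hKpos : 0 < K := by positivity
  have hDre : Dc.re = A := by
    simp [hDc, hA, Complex.add_re, Complex.mul_re, Complex.sub_re, Complex.ofReal_re,
      Complex.ofReal_im, Complex.one_re, Complex.one_im]
  have hDim : Dc.im = (1 - lam) * ε₀.im := by
    simp [hDc, Complex.add_im, Complex.mul_im, Complex.sub_im, Complex.ofReal_re,
      Complex.ofReal_im, Complex.one_re, Complex.one_im]
  have hApos : 0 < A := by
    rw [hA]; nlinarith
  have hDabs2' : Dabs2 = Complex.normSq Dc := by rw [hDabs2, Complex.sq_norm]
  have hDabs2pos : 0 < Dabs2 := by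
    rw [hDabs2']
    apply Complex.normSq_pos.2
    intro h
    have := hDim
    rw [h] at this
    simp at this
    rcases this with h1 | h2
    · linarith
    · linarith
  have hDcne : Dc ≠ 0 := by
    intro h
    rw [hDabs2', h] at hDabs2pos
    simp at hDabs2pos
  -- positivity of ωs
  have hrad : 0 < ω₀ ^ 2 + K * A / Dabs2 := by positivity
  have hωspos : 0 < ωs := by
    rw [hωs]
    exact Real.sqrt_pos.2 (by rw [hK] at hrad; exact hrad)
  have hωssq : ωs ^ 2 = ω₀ ^ 2 + K * A / Dabs2 := by
    rw [hωs, Real.sq_sqrt (by rw [hK] at hrad; exact hrad.le)]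
  have hγspos : 0 < γs := by
    have h1l : 0 < 1 - lam := by linarith
    rw [hγs]
    positivity
  have hγsωs : γs * ωs = K * ((1 - lam) * ε₀.im) / Dabs2 := by
    rw [hγs]
    field_simp
  -- key equivalence
  have key : ∀ ω γ : ℝ, 0 < ω → 0 < γ →
      (((1 - (lam : ℂ)) * ε₀ + (lam : ℂ) * (ε_inf : ℂ) *
        (1 + (ω_p : ℂ) ^ 2 / ((ω₀ : ℂ) ^ 2 - (ω : ℂ) ^ 2 + Complex.I * (γ : ℂ) * (ω : ℂ))) = 0)
      ↔ (ω₀ ^ 2 - ω ^ 2 = -(K * A) / Dabs2 ∧ γ * ω = K * ((1 - lam) * ε₀.im) / Dabs2)) := by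
    intro ω γ hω hγ
    set Q : ℂ := (ω₀ : ℂ) ^ 2 - (ω : ℂ) ^ 2 + Complex.I * (γ : ℂ) * (ω : ℂ) with hQ
    have hQre : Q.re = ω₀ ^ 2 - ω ^ 2 := by
      simp [hQ, ← Complex.ofReal_pow]
    have hQim : Q.im = γ * ω := by
      simp [hQ, ← Complex.ofReal_pow]
    have hQne : Q ≠ 0 := by
      intro h
      have : Q.im = 0 := by rw [h]; simp
      rw [hQim] at this
      nlinarith
    have step1 : ((1 - (lam : ℂ)) * ε₀ + (lam : ℂ) * (ε_inf : ℂ) *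
        (1 + (ω_p : ℂ) ^ 2 / Q) = 0) ↔ Q * Dc = -(K : ℂ) := by
      constructor
      · intro h
        field_simp [hQne] at h
        rw [hDc]
        push_cast [hK]
        linear_combination h
      · intro h
        field_simp [hQne]
        rw [hDc] at h
        push_cast [hK] at h
        linear_combination h
    have hre' : ((-(K : ℝ) : ℂ) / Dc).re = -(K * A) / Dabs2 := by
      rw [Complex.div_re]
      simp only [Complex.neg_re, Complex.ofReal_re, Complex.neg_im, Complex.ofReal_im,
        neg_zero, zero_mul, zero_div, add_zero, hDre, ← hDabs2']
      ring
    have him' : ((-(K : ℝ) : ℂ) / Dc).im = K * ((1 - lam) * ε₀.im) / Dabs2 := by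
      rw [Complex.div_im]
      simp only [Complex.neg_re, Complex.ofReal_re, Complex.neg_im, Complex.ofReal_im,
        neg_zero, zero_mul, zero_div, zero_add, hDim, ← hDabs2']
      ring
    have : -(K : ℂ) = ((-(K : ℝ) : ℂ)) := by push_cast; ring
    rw [step1, this, ← eq_div_iff hDcne, Complex.ext_iff, hQre, hQim, hre', him']
  refine ⟨hωspos, hγspos, ?_, ?_⟩
  · refine (key ωs γs hωspos hγspos).2 ⟨?_, hγsωs⟩
    rw [hωssq, neg_div]
    ring
  · intro ω γ hω hγ hE
    obtain ⟨h1, h2⟩ := (key ω γ hω hγ).1 hE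
    have hsq : ω ^ 2 = ωs ^ 2 := by
      rw [hωssq]
      have : -(K * A) / Dabs2 = -(K * A / Dabs2) := by ring
      rw [this] at h1
      linarith
    have hωeq : ω = ωs := by
      have h3 : ω = Real.sqrt (ω ^ 2) := (Real.sqrt_sq hω.le).symm
      rw [hsq, Real.sqrt_sq hωspos.le] at h3
      exact h3
    refine ⟨hωeq, ?_⟩
    have h4 : γ * ω = γs * ωs := by rw [h2, hγsωs]
    rw [hωeq] at h4
    exact mul_right_cancel₀ (ne_of_gt hωspos) h4
end

section
/- Let ε_∞, ω_p, ω₀ be positive real numbers and let ε₀ be a complex number with Re ε₀ > 0. Then the function Ω² : [0,1] → ℝ defined by Ω²(λ) := ω₀² + ω_p²·λ·ε_∞·((1−λ)·Re ε₀ + λ·ε_∞) / |(1−λ)ε₀ + λ·ε_∞|² is strictly increasing on [0,1]; in particular, if 0 ≤ λ < μ ≤ 1 then Ω²(λ) < Ω²(μ), so the resonant frequencies ω_n ordered by the eigenvalues λ_n are strictly increasing in λ_n. -/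
/-- The squared resonant frequency `Ω²(λ) = ω₀² + ω_p² λ ε_∞ ((1−λ) Re ε₀ + λ ε_∞)/|D(λ)|²`
is strictly increasing on `[0,1]`; in particular `0 ≤ λ < μ ≤ 1` implies `Ω²(λ) < Ω²(μ)`. -/
theorem stmt5 (ε_inf ω_p ω₀ : ℝ) (hεinf : 0 < ε_inf) (hωp : 0 < ω_p) (hω₀ : 0 < ω₀)
    (ε₀ : ℂ) (hre : 0 < ε₀.re) :
    StrictMonoOn (fun l : ℝ => ω₀ ^ 2 + ω_p ^ 2 * l * ε_inf * ((1 - l) * ε₀.re + l * ε_inf) /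
      (‖(1 - (l : ℂ)) * ε₀ + (l : ℂ) * (ε_inf : ℂ)‖) ^ 2) (Set.Icc (0 : ℝ) 1) := by
  intro x hx y hy hxy
  obtain ⟨hx0, hx1⟩ := hx
  obtain ⟨hy0, hy1⟩ := hy
  set a := ε₀.re with ha
  set b := ε₀.im with hb
  have habs : ∀ l : ℝ, (‖(1 - (l : ℂ)) * ε₀ + (l : ℂ) * (ε_inf : ℂ)‖) ^ 2
      = ((1 - l) * a + l * ε_inf) ^ 2 + ((1 - l) * b) ^ 2 := by
    intro l
    rw [Complex.sq_norm, Complex.normSq_apply]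
    simp [Complex.add_re, Complex.add_im, Complex.mul_re, Complex.mul_im, ← ha, ← hb]
    ring
  have hRx : 0 < (1 - x) * a + x * ε_inf := by
    rcases eq_or_lt_of_le hx1 with h | h
    · subst h; simpa using hεinf
    · have : 0 < (1 - x) * a := mul_pos (by linarith) hre
      nlinarith [mul_nonneg hx0 hεinf.le]
  have hRy : 0 < (1 - y) * a + y * ε_inf := by
    rcases eq_or_lt_of_le hy1 with h | h
    · subst h; simpa using hεinf
    · have : 0 < (1 - y) * a := mul_pos (by linarith) hre
      nlinarith [mul_nonneg hy0 hεinf.le]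
  have hDx : 0 < ((1 - x) * a + x * ε_inf) ^ 2 + ((1 - x) * b) ^ 2 := by positivity
  have hDy : 0 < ((1 - y) * a + y * ε_inf) ^ 2 + ((1 - y) * b) ^ 2 := by positivity
  simp only [habs]
  have key : y * ((1 - y) * a + y * ε_inf) * (((1 - x) * a + x * ε_inf) ^ 2 + ((1 - x) * b) ^ 2)
      - x * ((1 - x) * a + x * ε_inf) * (((1 - y) * a + y * ε_inf) ^ 2 + ((1 - y) * b) ^ 2)
      = (y - x) * (a * (((1 - x) * a + x * ε_inf) * ((1 - y) * a + y * ε_inf))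
        + b ^ 2 * (a * (1 - x) * (1 - y) + ε_inf * (y * (1 - x) + x * (1 - y)))) := by ring
  have h1 : 0 < a * (((1 - x) * a + x * ε_inf) * ((1 - y) * a + y * ε_inf)) :=
    mul_pos hre (mul_pos hRx hRy)
  have h2 : 0 ≤ b ^ 2 * (a * (1 - x) * (1 - y) + ε_inf * (y * (1 - x) + x * (1 - y))) := by
    apply mul_nonneg (sq_nonneg b)
    have : 0 ≤ a * (1 - x) * (1 - y) :=
      mul_nonneg (mul_nonneg hre.le (by linarith)) (by linarith)
    have : 0 ≤ ε_inf * (y * (1 - x) + x * (1 - y)) := by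
      apply mul_nonneg hεinf.le
      have := mul_nonneg hy0 (show (0:ℝ) ≤ 1 - x by linarith)
      have := mul_nonneg hx0 (show (0:ℝ) ≤ 1 - y by linarith)
      linarith
    linarith
  have hnum : x * ((1 - x) * a + x * ε_inf) * (((1 - y) * a + y * ε_inf) ^ 2 + ((1 - y) * b) ^ 2)
      < y * ((1 - y) * a + y * ε_inf) * (((1 - x) * a + x * ε_inf) ^ 2 + ((1 - x) * b) ^ 2) := by
    nlinarith [mul_pos (sub_pos.2 hxy) h1, mul_nonneg (sub_pos.2 hxy).le h2]
  have hdiv : ω_p ^ 2 * x * ε_inf * ((1 - x) * a + x * ε_inf) /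
        (((1 - x) * a + x * ε_inf) ^ 2 + ((1 - x) * b) ^ 2)
      < ω_p ^ 2 * y * ε_inf * ((1 - y) * a + y * ε_inf) /
        (((1 - y) * a + y * ε_inf) ^ 2 + ((1 - y) * b) ^ 2) := by
    rw [div_lt_div_iff₀ hDx hDy]
    nlinarith [mul_lt_mul_of_pos_left hnum (mul_pos (pow_pos hωp 2) hεinf)]
  linarith
end

section
/- Let ε_∞, ω_p, ω₀ be positive real numbers and let ε₀ be a complex number with Re ε₀ > 0. For λ ∈ [0,1] set D(λ) := (1−λ)ε₀ + λ·ε_∞. Then for every λ ∈ (0,1) the function Ω²(λ) := ω₀² + ω_p²·λ·ε_∞·((1−λ)·Re ε₀ + λ·ε_∞)/|D(λ)|² is differentiable at λ with derivative equal to ω_p²·ε_∞·( Re ε₀·|D(λ)|² + 2·λ·(1−λ)·ε_∞·(Im ε₀)² ) / |D(λ)|⁴, and this derivative is strictly positive. -/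
/-- For `λ ∈ (0,1)`, the squared resonant frequency
`Ω²(l) = ω₀² + ω_p² l ε_∞ ((1−l) Re ε₀ + l ε_∞)/|D(l)|²` is differentiable at `λ`
with derivative `ω_p² ε_∞ (Re ε₀ |D(λ)|² + 2 λ (1−λ) ε_∞ (Im ε₀)²)/|D(λ)|⁴ > 0`. -/
theorem stmt6 (ε_inf ω_p ω₀ : ℝ) (hεinf : 0 < ε_inf) (hωp : 0 < ω_p) (hω₀ : 0 < ω₀)
    (ε₀ : ℂ) (hre : 0 < ε₀.re)
    (lam : ℝ) (hlam : lam ∈ Set.Ioo (0 : ℝ) 1) :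
    HasDerivAt (fun l : ℝ => ω₀ ^ 2 + ω_p ^ 2 * l * ε_inf * ((1 - l) * ε₀.re + l * ε_inf) /
        (‖(1 - (l : ℂ)) * ε₀ + (l : ℂ) * (ε_inf : ℂ)‖) ^ 2)
      (ω_p ^ 2 * ε_inf *
        (ε₀.re * (‖(1 - (lam : ℂ)) * ε₀ + (lam : ℂ) * (ε_inf : ℂ)‖) ^ 2 +
          2 * lam * (1 - lam) * ε_inf * ε₀.im ^ 2) /
        (‖(1 - (lam : ℂ)) * ε₀ + (lam : ℂ) * (ε_inf : ℂ)‖) ^ 4) lam ∧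
    0 < ω_p ^ 2 * ε_inf *
        (ε₀.re * (‖(1 - (lam : ℂ)) * ε₀ + (lam : ℂ) * (ε_inf : ℂ)‖) ^ 2 +
          2 * lam * (1 - lam) * ε_inf * ε₀.im ^ 2) /
        (‖(1 - (lam : ℂ)) * ε₀ + (lam : ℂ) * (ε_inf : ℂ)‖) ^ 4 := by
  obtain ⟨h0, h1⟩ := hlam
  set a : ℝ → ℝ := fun l => (1 - l) * ε₀.re + l * ε_inf with ha
  set b : ℝ → ℝ := fun l => (1 - l) * ε₀.im with hb
  have key : ∀ l : ℝ, (‖(1 - (l : ℂ)) * ε₀ + (l : ℂ) * (ε_inf : ℂ)‖) ^ 2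
      = a l ^ 2 + b l ^ 2 := by
    intro l
    rw [Complex.sq_norm, Complex.normSq_apply]
    simp [ha, hb, Complex.add_re, Complex.add_im, Complex.mul_re, Complex.mul_im]
    ring
  have hapos : 0 < a lam := by
    have : 0 < (1 - lam) * ε₀.re := mul_pos (by linarith) hre
    have : 0 < lam * ε_inf := mul_pos h0 hεinf
    simp only [ha]; linarith
  have hQpos : 0 < a lam ^ 2 + b lam ^ 2 := by positivity
  have hQne : a lam ^ 2 + b lam ^ 2 ≠ 0 := ne_of_gt hQpos
  -- derivatives
  have hda : HasDerivAt a (ε_inf - ε₀.re) lam := by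
    have : HasDerivAt (fun l : ℝ => (1 - l) * ε₀.re + l * ε_inf) (ε_inf - ε₀.re) lam := by
      have h1 : HasDerivAt (fun l : ℝ => (1 - l) * ε₀.re) (-ε₀.re) lam := by
        simpa using (((hasDerivAt_id lam).const_sub 1).mul_const ε₀.re)
      have h2 : HasDerivAt (fun l : ℝ => l * ε_inf) ε_inf lam := by
        simpa using (hasDerivAt_id lam).mul_const ε_inf
      exact (h1.add h2).congr_deriv (by ring)
    exact this
  have hdb : HasDerivAt b (-ε₀.im) lam := by
    simpa using (((hasDerivAt_id lam).const_sub 1).mul_const ε₀.im)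
  have hdN : HasDerivAt (fun l : ℝ => ω_p ^ 2 * l * ε_inf * a l)
      (ω_p ^ 2 * ε_inf * a lam + ω_p ^ 2 * lam * ε_inf * (ε_inf - ε₀.re)) lam := by
    have hl : HasDerivAt (fun l : ℝ => ω_p ^ 2 * l * ε_inf) (ω_p ^ 2 * ε_inf) lam := by
      have := ((hasDerivAt_id lam).const_mul (ω_p ^ 2)).mul_const ε_inf
      simpa using this
    exact (hl.mul hda).congr_deriv (by ring)
  have hdQ : HasDerivAt (fun l : ℝ => a l ^ 2 + b l ^ 2)
      (2 * a lam * (ε_inf - ε₀.re) + 2 * b lam * (-ε₀.im)) lam := by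
    have h1 := hda.pow 2
    have h2 := hdb.pow 2
    have := h1.add h2
    exact this.congr_deriv (by norm_num)
  have hdiv := hdN.div hdQ hQne
  have hmain := hdiv.const_add (ω₀ ^ 2)
  constructor
  · have heq : (fun l : ℝ => ω₀ ^ 2 + ω_p ^ 2 * l * ε_inf * ((1 - l) * ε₀.re + l * ε_inf) /
        (‖(1 - (l : ℂ)) * ε₀ + (l : ℂ) * (ε_inf : ℂ)‖) ^ 2)
        = (fun l : ℝ => ω₀ ^ 2 + ω_p ^ 2 * l * ε_inf * a l / (a l ^ 2 + b l ^ 2)) := by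
      funext l; rw [key l]
    rw [heq, key lam, show (‖(1 - (lam : ℂ)) * ε₀ + (lam : ℂ) * (ε_inf : ℂ)‖) ^ 4
        = (a lam ^ 2 + b lam ^ 2) ^ 2 by rw [show (4:ℕ) = 2*2 by rfl, pow_mul, key lam]]
    refine hmain.congr_deriv ?_
    field_simp
    simp only [ha, hb]
    ring
  · rw [key lam, show (‖(1 - (lam : ℂ)) * ε₀ + (lam : ℂ) * (ε_inf : ℂ)‖) ^ 4
        = (a lam ^ 2 + b lam ^ 2) ^ 2 by rw [show (4:ℕ) = 2*2 by rfl, pow_mul, key lam]]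
    have hnum : 0 < ε₀.re * (a lam ^ 2 + b lam ^ 2) + 2 * lam * (1 - lam) * ε_inf * ε₀.im ^ 2 := by
      have h2 : 0 ≤ 2 * lam * (1 - lam) * ε_inf * ε₀.im ^ 2 :=
        mul_nonneg (mul_nonneg (mul_nonneg (by linarith : (0:ℝ) ≤ 2 * lam) (by linarith)) hεinf.le) (sq_nonneg _)
      nlinarith [mul_pos hre hQpos]
    exact div_pos (mul_pos (mul_pos (pow_pos hωp 2) hεinf) hnum) (pow_pos hQpos 2)
end

section
/- Let ε_∞, ω_p, ω₀ be positive real numbers and let ε₀ be a complex number with Re ε₀ > ε_∞ and Im ε₀ > 0. Let λ ∈ (0,1) and let ω_λ > 0, γ_λ > 0 satisfy (1−λ)ε₀ + λ·ε_∞·(1 + ω_p²/(ω₀² − ω_λ² + iγ_λω_λ)) = 0. Then there exist constants c > 0, C > 0 and t₀ > 0 such that for every real t with 0 < |t| < t₀, one has c·|t| ≤ |(1−λ)ε₀ + λ·ε_∞·(1 + ω_p²/(ω₀² − (ω_λ+t)² + i(γ_λ+t)(ω_λ+t)))| ≤ C·|t|. -/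
set_option maxHeartbeats 1000000 in
/-- Near a plasmonic resonance `(ω_λ, γ_λ)`, the dispersion function evaluated at
`(ω_λ + t, γ_λ + t)` has modulus comparable to `|t|`: there exist `c, C, t₀ > 0` such that
`c|t| ≤ |f_λ(ω_λ+t, γ_λ+t)| ≤ C|t|` for all `0 < |t| < t₀`. -/
theorem stmt8 (ε_inf ω_p ω₀ : ℝ) (hεinf : 0 < ε_inf) (hωp : 0 < ω_p) (hω₀ : 0 < ω₀)
    (ε₀ : ℂ) (hre : ε_inf < ε₀.re) (him : 0 < ε₀.im)
    (lam : ℝ) (hlam : lam ∈ Set.Ioo (0 : ℝ) 1)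
    (ωl γl : ℝ) (hωl : 0 < ωl) (hγl : 0 < γl)
    (hdisp : (1 - (lam : ℂ)) * ε₀ + (lam : ℂ) * (ε_inf : ℂ) *
      (1 + (ω_p : ℂ) ^ 2 / ((ω₀ : ℂ) ^ 2 - (ωl : ℂ) ^ 2 + Complex.I * (γl : ℂ) * (ωl : ℂ))) = 0) :
    ∃ c > (0 : ℝ), ∃ C > (0 : ℝ), ∃ t₀ > (0 : ℝ), ∀ t : ℝ, 0 < |t| → |t| < t₀ →
      c * |t| ≤ ‖((1 - (lam : ℂ)) * ε₀ + (lam : ℂ) * (ε_inf : ℂ) *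
          (1 + (ω_p : ℂ) ^ 2 / ((ω₀ : ℂ) ^ 2 - ((ωl + t : ℝ) : ℂ) ^ 2 +
            Complex.I * ((γl + t : ℝ) : ℂ) * ((ωl + t : ℝ) : ℂ))))‖ ∧
      ‖((1 - (lam : ℂ)) * ε₀ + (lam : ℂ) * (ε_inf : ℂ) *
          (1 + (ω_p : ℂ) ^ 2 / ((ω₀ : ℂ) ^ 2 - ((ωl + t : ℝ) : ℂ) ^ 2 +
            Complex.I * ((γl + t : ℝ) : ℂ) * ((ωl + t : ℝ) : ℂ))))‖ ≤ C * |t| := by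
  obtain ⟨hlam0, hlam1⟩ := hlam
  set D0 : ℂ := (ω₀ : ℂ) ^ 2 - (ωl : ℂ) ^ 2 + Complex.I * (γl : ℂ) * (ωl : ℂ) with hD0def
  have hD0im : D0.im = γl * ωl := by
    simp [hD0def, ← Complex.ofReal_pow, Complex.mul_im, Complex.mul_re]
  have hD0 : D0 ≠ 0 := by
    intro h
    rw [h, Complex.zero_im] at hD0im
    nlinarith
  set d0 := ‖D0‖ with hd0def
  have hd0 : 0 < d0 := norm_pos_iff.mpr hD0
  set N0 : ℂ := ((2 * ωl : ℝ) : ℂ) - Complex.I * ((γl + ωl : ℝ) : ℂ) with hN0def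
  have hN0 : N0 ≠ 0 := by
    intro h
    have h2 : N0.im = -(γl + ωl) := by
      simp [hN0def, Complex.sub_im, Complex.mul_im]
    rw [h, Complex.zero_im] at h2
    nlinarith
  set n0 := ‖N0‖ with hn0def
  have hn0 : 0 < n0 := norm_pos_iff.mpr hN0
  have hdisp' : (1 - (lam : ℂ)) * ε₀ * D0 + (lam : ℂ) * ε_inf * (D0 + (ω_p : ℂ) ^ 2) = 0 := by
    have h := hdisp
    field_simp [hD0] at h
    linear_combination h
  set K := lam * ε_inf * ω_p ^ 2 with hKdef
  have hK : 0 < K := by positivity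
  refine ⟨K * (n0 / 2) / ((3 * d0 / 2) * d0), by positivity,
          K * (n0 + 2) / ((d0 / 2) * d0), by positivity,
          min (min 1 (min (ωl / 2) (γl / 2))) (min (n0 / 4) (d0 / (2 * (n0 + 2)))), ?_, ?_⟩
  · have h1 : (0:ℝ) < d0 / (2 * (n0 + 2)) := by positivity
    have h2 : (0:ℝ) < n0 / 4 := by positivity
    have h3 : (0:ℝ) < ωl / 2 := by positivity
    have h4 : (0:ℝ) < γl / 2 := by positivity
    simp only [lt_min_iff]
    exact ⟨⟨one_pos, h3, h4⟩, h2, h1⟩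
  intro t ht htlt
  have ht1 : |t| < 1 := lt_of_lt_of_le htlt (le_trans (min_le_left _ _) (min_le_left _ _))
  have htω : |t| < ωl / 2 := lt_of_lt_of_le htlt (le_trans (min_le_left _ _)
    (le_trans (min_le_right _ _) (min_le_left _ _)))
  have htγ : |t| < γl / 2 := lt_of_lt_of_le htlt (le_trans (min_le_left _ _)
    (le_trans (min_le_right _ _) (min_le_right _ _)))
  have htn : |t| < n0 / 4 := lt_of_lt_of_le htlt (le_trans (min_le_right _ _) (min_le_left _ _))
  have htd : |t| < d0 / (2 * (n0 + 2)) :=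
    lt_of_lt_of_le htlt (le_trans (min_le_right _ _) (min_le_right _ _))
  have habs_t := abs_lt.mp htω
  have habs_t' := abs_lt.mp htγ
  set Dt : ℂ := (ω₀ : ℂ) ^ 2 - ((ωl + t : ℝ) : ℂ) ^ 2 +
      Complex.I * ((γl + t : ℝ) : ℂ) * ((ωl + t : ℝ) : ℂ) with hDtdef
  have hDtim : Dt.im = (γl + t) * (ωl + t) := by
    simp only [hDtdef, ← Complex.ofReal_pow, Complex.add_im, Complex.sub_im, Complex.mul_im,
      Complex.mul_re, Complex.ofReal_im, Complex.ofReal_re, Complex.I_re, Complex.I_im]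
    ring
  have hDt : Dt ≠ 0 := by
    intro h
    rw [h, Complex.zero_im] at hDtim
    nlinarith [habs_t.1, habs_t'.1]
  set N : ℂ := ((2 * ωl + t : ℝ) : ℂ) - Complex.I * ((γl + ωl + t : ℝ) : ℂ) with hNdef
  have hDN : D0 - Dt = (t : ℂ) * N := by
    simp only [hD0def, hDtdef, hNdef]
    push_cast
    ring
  have expand : (1 - (lam : ℂ)) * ε₀ + (lam : ℂ) * (ε_inf : ℂ) *
      (1 + (ω_p : ℂ) ^ 2 / Dt) =
      ((1 - (lam : ℂ)) * ε₀ * Dt + (lam : ℂ) * ε_inf * (Dt + (ω_p : ℂ) ^ 2)) / Dt := by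
    field_simp
  have key : (1 - (lam : ℂ)) * ε₀ + (lam : ℂ) * (ε_inf : ℂ) *
      (1 + (ω_p : ℂ) ^ 2 / Dt) = (K : ℂ) * (t : ℂ) * N / (Dt * D0) := by
    rw [expand, div_eq_div_iff hDt (mul_ne_zero hDt hD0)]
    rw [hKdef]
    push_cast
    linear_combination Dt ^ 2 * hdisp' + (lam : ℂ) * (ε_inf : ℂ) * (ω_p : ℂ) ^ 2 * Dt * hDN
  rw [key]
  have habs : ‖(K : ℂ) * (t : ℂ) * N / (Dt * D0)‖ =
      K * |t| * ‖N‖ / (‖Dt‖ * d0) := by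
    rw [norm_div, norm_mul, norm_mul, norm_mul, Complex.norm_real, Complex.norm_real, Real.norm_eq_abs,
      Real.norm_eq_abs,
      abs_of_pos hK, hd0def]
  rw [habs]
  have hNN0 : ‖N - N0‖ ≤ 2 * |t| := by
    have h : N - N0 = (t : ℂ) * (1 - Complex.I) := by
      simp only [hNdef, hN0def]; push_cast; ring
    rw [h, norm_mul, Complex.norm_real, Real.norm_eq_abs]
    have h2 : ‖1 - Complex.I‖ ≤ 2 := by
      have := norm_add_le 1 (-Complex.I)
      simp only [← sub_eq_add_neg, norm_neg, norm_one, Complex.norm_I] at this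
      linarith
    nlinarith [abs_nonneg t]
  have hNle : ‖N‖ ≤ n0 + 2 := by
    have h : ‖N‖ ≤ n0 + ‖N - N0‖ := by
      rw [hn0def]
      have := norm_add_le N0 (N - N0)
      rw [show N0 + (N - N0) = N from by ring] at this
      exact this
    nlinarith
  have hNge : n0 / 2 ≤ ‖N‖ := by
    have h : n0 ≤ ‖N‖ + ‖N - N0‖ := by
      rw [hn0def]
      have := norm_add_le N (N0 - N)
      rw [show N + (N0 - N) = N0 from by ring, norm_sub_rev N0 N] at this
      exact this
    linarith
  have hDtD0 : ‖Dt - D0‖ ≤ d0 / 2 := by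
    rw [norm_sub_rev Dt D0, hDN, norm_mul, Complex.norm_real, Real.norm_eq_abs]
    have h1 : |t| * ‖N‖ ≤ |t| * (n0 + 2) :=
      mul_le_mul_of_nonneg_left hNle (abs_nonneg t)
    have h2 : |t| * (n0 + 2) ≤ d0 / 2 := by
      have h3 := (lt_div_iff₀ (by positivity : (0:ℝ) < 2 * (n0 + 2))).mp htd
      nlinarith
    linarith
  have hDtle : ‖Dt‖ ≤ 3 * d0 / 2 := by
    have h : ‖Dt‖ ≤ d0 + ‖Dt - D0‖ := by
      rw [hd0def]
      have := norm_add_le D0 (Dt - D0)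
      rw [show D0 + (Dt - D0) = Dt from by ring] at this
      exact this
    linarith
  have hDtge : d0 / 2 ≤ ‖Dt‖ := by
    have h : d0 ≤ ‖Dt‖ + ‖Dt - D0‖ := by
      rw [hd0def]
      have := norm_add_le Dt (D0 - Dt)
      rw [show Dt + (D0 - Dt) = D0 from by ring, norm_sub_rev D0 Dt] at this
      exact this
    linarith
  have hDtpos : 0 < ‖Dt‖ := norm_pos_iff.mpr hDt
  constructor
  · have : K * (n0 / 2) / ((3 * d0 / 2) * d0) * |t| =
        K * |t| * (n0 / 2) / ((3 * d0 / 2) * d0) := by ring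
    rw [this]
    gcongr
  · have : K * (n0 + 2) / ((d0 / 2) * d0) * |t| =
        K * |t| * (n0 + 2) / ((d0 / 2) * d0) := by ring
    rw [this]
    gcongr
end

section
/- Work in ℝ³ (the Euclidean space EuclideanSpace ℝ (Fin 3)). Let a > 0, z ∈ ℝ³, and let D be a measurable subset of the closed ball of center z and radius a. Let f : ℝ³ → ℂ be measurable with ∫_D |f(y)|² dy < ∞. Then the function T(f)(x) := ∫_D f(y)/(4π‖x−y‖²) dy satisfies ∫_D |T(f)(x)|² dx ≤ 4a² · ∫_D |f(y)|² dy. (This is the L²(D)→L²(D) bound O(a) for integral operators whose kernel is dominated by |∇Φ₀|, such as ∇N.) -/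
open MeasureTheory ENNReal Set Metric

local notation "E3" => EuclideanSpace ℝ (Fin 3)

lemma aux_polar (G : ℝ → ℝ≥0∞) (hG : Measurable G) :
    ∫⁻ w : E3, G ‖w‖ =
      (3 : ℝ≥0∞) * volume (Metric.ball (0 : E3) 1) *
        ∫⁻ r in Set.Ioi (0:ℝ), ENNReal.ofReal (r ^ 2) * G r := by
  have hdim : Module.finrank ℝ E3 = 3 := finrank_euclideanSpace_fin
  have h1 : ∫⁻ w : E3, G ‖w‖ = ∫⁻ w in ({0}ᶜ : Set E3), G ‖w‖ := by
    rw [← setLIntegral_univ]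
    refine setLIntegral_congr ?_
    exact (ae_eq_univ.2 (by simp)).symm
  have h2 : ∫⁻ w in ({0}ᶜ : Set E3), G ‖w‖
      = ∫⁻ x : ({0}ᶜ : Set E3), G ‖(x : E3)‖ ∂((volume : Measure E3).comap (↑)) :=
    (lintegral_subtype_comap (measurableSet_singleton 0).compl _).symm
  have hmeas : Measurable fun p : (Metric.sphere (0:E3) 1 × Set.Ioi (0:ℝ)) => G p.2.1 :=
    hG.comp (measurable_subtype_coe.comp measurable_snd)
  have h3 : ∫⁻ x : ({0}ᶜ : Set E3), G ‖(x : E3)‖ ∂((volume : Measure E3).comap (↑))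
      = ∫⁻ p : (Metric.sphere (0:E3) 1 × Set.Ioi (0:ℝ)), G p.2.1
          ∂((volume : Measure E3).toSphere.prod (Measure.volumeIoiPow 2)) := by
    have := (Measure.measurePreserving_homeomorphUnitSphereProd
      (volume : Measure E3)).lintegral_comp (f := fun p => G p.2.1) hmeas
    rw [hdim] at this
    simp only [homeomorphUnitSphereProd_apply_snd_coe] at this
    exact this
  have h4 : ∫⁻ p : (Metric.sphere (0:E3) 1 × Set.Ioi (0:ℝ)), G p.2.1
          ∂((volume : Measure E3).toSphere.prod (Measure.volumeIoiPow 2))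
      = (volume : Measure E3).toSphere Set.univ *
          ∫⁻ r : Set.Ioi (0:ℝ), G r.1 ∂(Measure.volumeIoiPow 2) := by
    rw [lintegral_prod _ hmeas.aemeasurable]
    simp [lintegral_const, mul_comm]
  have h5 : ∫⁻ r : Set.Ioi (0:ℝ), G r.1 ∂(Measure.volumeIoiPow 2)
      = ∫⁻ r in Set.Ioi (0:ℝ), ENNReal.ofReal (r ^ 2) * G r := by
    rw [Measure.volumeIoiPow,
      lintegral_withDensity_eq_lintegral_mul _
        ((measurable_subtype_coe.pow_const 2).ennreal_ofReal)
        (g := fun r : Set.Ioi (0:ℝ) => G r.1) (hG.comp measurable_subtype_coe)]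
    exact lintegral_subtype_comap measurableSet_Ioi fun r => ENNReal.ofReal (r ^ 2) * G r
  have h6 : (volume : Measure E3).toSphere Set.univ
      = (3 : ℝ≥0∞) * volume (Metric.ball (0 : E3) 1) := by
    rw [Measure.toSphere_apply_univ, hdim]; norm_num
  rw [h1, h2, h3, h4, h5, h6]

lemma aux_ball (R : ℝ) (hR : 0 ≤ R) (x : E3) (D : Set (EuclideanSpace ℝ (Fin 3)))
    (hD : D ⊆ Metric.closedBall x R) :
    ∫⁻ y in D, ENNReal.ofReal (1 / (4 * Real.pi * ‖x - y‖ ^ 2)) ≤ ENNReal.ofReal R := by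
  set G : ℝ → ℝ≥0∞ := fun r =>
    if r ≤ R then ENNReal.ofReal (1 / (4 * Real.pi * r ^ 2)) else 0 with hGdef
  have hG : Measurable G := by
    apply Measurable.ite measurableSet_Iic _ measurable_const
    have : Measurable fun r : ℝ => 4 * Real.pi * r ^ 2 :=
      (measurable_id.pow_const 2).const_mul _
    simpa [one_div] using this.inv.ennreal_ofReal
  have hmp : MeasurePreserving (fun w : E3 => x - w) volume volume :=
    ⟨measurable_const.sub measurable_id, Measure.map_sub_left_eq_self volume x⟩
  have hpre : (fun w : E3 => x - w) ⁻¹' Metric.closedBall x R = Metric.closedBall 0 R := by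
    ext w
    simp [Metric.mem_closedBall, dist_eq_norm, sub_sub_cancel_left, norm_neg]
  calc ∫⁻ y in D, ENNReal.ofReal (1 / (4 * Real.pi * ‖x - y‖ ^ 2))
      ≤ ∫⁻ y in Metric.closedBall x R, ENNReal.ofReal (1 / (4 * Real.pi * ‖x - y‖ ^ 2)) :=
        lintegral_mono_set hD
    _ = ∫⁻ w in Metric.closedBall (0 : E3) R,
          ENNReal.ofReal (1 / (4 * Real.pi * ‖x - (x - w)‖ ^ 2)) := by
        have hfm : Measurable fun y : E3 => ENNReal.ofReal (1 / (4 * Real.pi * ‖x - y‖ ^ 2)) := by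
          have : Measurable fun y : E3 => 4 * Real.pi * ‖x - y‖ ^ 2 :=
            (((measurable_const.sub measurable_id).norm).pow_const 2).const_mul _
          simpa [one_div] using this.inv.ennreal_ofReal
        have h := hmp.setLIntegral_comp_preimage (s := Metric.closedBall x R)
          measurableSet_closedBall
          (f := fun y : E3 => ENNReal.ofReal (1 / (4 * Real.pi * ‖x - y‖ ^ 2))) hfm
        rw [hpre] at h
        exact h.symm
    _ = ∫⁻ w in Metric.closedBall (0 : E3) R, G ‖w‖ := by
        refine setLIntegral_congr_fun measurableSet_closedBall (fun w hw => ?_) 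
        have hwR : ‖w‖ ≤ R := by simpa [dist_zero_right] using hw
        simp [G, hwR, _root_.sub_sub_cancel]
    _ ≤ ∫⁻ w : E3, G ‖w‖ := setLIntegral_le_lintegral _ _
    _ = (3 : ℝ≥0∞) * volume (Metric.ball (0 : E3) 1) *
          ∫⁻ r in Set.Ioi (0:ℝ), ENNReal.ofReal (r ^ 2) * G r := aux_polar G hG
    _ ≤ ENNReal.ofReal R := by
        have hI : ∫⁻ r in Set.Ioi (0:ℝ), ENNReal.ofReal (r ^ 2) * G r
            = ENNReal.ofReal (1 / (4 * Real.pi)) * ENNReal.ofReal R := by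
          have hcongr : ∀ r ∈ Set.Ioi (0:ℝ), ENNReal.ofReal (r ^ 2) * G r
              = (Set.Ioc 0 R).indicator
                  (fun _ => ENNReal.ofReal (1 / (4 * Real.pi))) r := by
            intro r hr
            by_cases hrR : r ≤ R
            · rw [Set.indicator_of_mem (Set.mem_Ioc.2 ⟨hr, hrR⟩)]
              simp only [G, if_pos hrR]
              rw [← ENNReal.ofReal_mul (sq_nonneg r)]
              congr 1
              have hr0 : r ≠ 0 := ne_of_gt hr
              field_simp
            · rw [Set.indicator_of_notMem (fun h => hrR h.2)]
              simp [G, hrR]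
          rw [setLIntegral_congr_fun measurableSet_Ioi hcongr,
            lintegral_indicator measurableSet_Ioc, setLIntegral_const,
            Measure.restrict_apply measurableSet_Ioc,
            Set.inter_eq_left.2 Set.Ioc_subset_Ioi_self, Real.volume_Ioc]
          simp
        rw [hI, EuclideanSpace.volume_ball]
        simp only [Fintype.card_fin]
        have h1 : ENNReal.ofReal (1:ℝ) ^ 3 = 1 := by simp
        have hg : Real.Gamma ((3:ℕ) / 2 + 1) = 3 / 4 * Real.sqrt Real.pi := by
          have h32 : ((3:ℕ):ℝ) / 2 + 1 = (1/2 + 1) + 1 := by norm_num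
          rw [h32, Real.Gamma_add_one (by norm_num), Real.Gamma_add_one (by norm_num),
            Real.Gamma_one_half_eq]
          ring
        have hsq : Real.sqrt Real.pi ^ 3 = Real.pi * Real.sqrt Real.pi := by
          rw [pow_succ, pow_two, Real.mul_self_sqrt Real.pi_pos.le]
        have hval : (3 : ℝ≥0∞) * (ENNReal.ofReal (1:ℝ) ^ 3 *
            ENNReal.ofReal (Real.sqrt Real.pi ^ 3 / Real.Gamma ((3:ℕ) / 2 + 1))) *
            ENNReal.ofReal (1 / (4 * Real.pi)) = 1 := by
          rw [h1, one_mul, hg, hsq]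
          rw [show (3 : ℝ≥0∞) = ENNReal.ofReal (3:ℝ) by simp,
            ← ENNReal.ofReal_mul (by norm_num), ← ENNReal.ofReal_mul (by positivity)]
          rw [show (3:ℝ) * (Real.pi * Real.sqrt Real.pi / (3 / 4 * Real.sqrt Real.pi)) *
              (1 / (4 * Real.pi)) = 1 by
            have hpi : Real.pi ≠ 0 := Real.pi_ne_zero
            have hs : Real.sqrt Real.pi ≠ 0 := by positivity
            field_simp]
          simp
        calc (3 : ℝ≥0∞) * (ENNReal.ofReal (1:ℝ) ^ 3 *
              ENNReal.ofReal (Real.sqrt Real.pi ^ 3 / Real.Gamma ((3:ℕ) / 2 + 1))) *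
              (ENNReal.ofReal (1 / (4 * Real.pi)) * ENNReal.ofReal R)
            = ((3 : ℝ≥0∞) * (ENNReal.ofReal (1:ℝ) ^ 3 *
              ENNReal.ofReal (Real.sqrt Real.pi ^ 3 / Real.Gamma ((3:ℕ) / 2 + 1))) *
              ENNReal.ofReal (1 / (4 * Real.pi))) * ENNReal.ofReal R := by ring
          _ = ENNReal.ofReal R := by rw [hval, one_mul]
          _ ≤ ENNReal.ofReal R := le_rfl

lemma aux_CS {α : Type*} [MeasurableSpace α] (μ : Measure α) {f g : α → ℝ≥0∞}
    (hf : AEMeasurable f μ) (hg : AEMeasurable g μ) :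
    (∫⁻ a, f a * g a ∂μ) ^ 2 ≤ (∫⁻ a, f a ^ 2 ∂μ) * (∫⁻ a, g a ^ 2 ∂μ) := by
  have hconj : Real.HolderConjugate 2 2 := Real.holderConjugate_iff.mpr ⟨one_lt_two, by norm_num⟩
  have h := ENNReal.lintegral_mul_le_Lp_mul_Lq μ hconj hf hg
  have hx : ∀ x : ℝ≥0∞, (x ^ (1/2 : ℝ)) ^ (2:ℕ) = x := fun x => by
    rw [← ENNReal.rpow_natCast (x ^ (1/2:ℝ)) 2, ← ENNReal.rpow_mul]
    norm_num
  have h2 : ∀ x : ℝ≥0∞, x ^ (2:ℝ) = x ^ (2:ℕ) := fun x => by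
    rw [← ENNReal.rpow_natCast x 2]; norm_num
  simp only [Pi.mul_apply, h2] at h
  calc (∫⁻ a, f a * g a ∂μ) ^ 2
      ≤ ((∫⁻ a, f a ^ (2:ℕ) ∂μ) ^ (1/2:ℝ) * (∫⁻ a, g a ^ (2:ℕ) ∂μ) ^ (1/2:ℝ)) ^ 2 :=
        pow_le_pow_left' h 2
    _ = (∫⁻ a, f a ^ 2 ∂μ) * (∫⁻ a, g a ^ 2 ∂μ) := by
        rw [mul_pow, hx, hx]

set_option maxHeartbeats 1000000 in
/-- `L²(D) → L²(D)` bound for the operator with kernel `1/(4π‖x−y‖²)` (dominating `|∇Φ₀|`)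
on a set `D` contained in a ball of radius `a`: `‖T f‖²_{L²(D)} ≤ 4 a² ‖f‖²_{L²(D)}`. -/
theorem stmt11 (a : ℝ) (ha : 0 < a) (z : EuclideanSpace ℝ (Fin 3))
    (D : Set (EuclideanSpace ℝ (Fin 3))) (hDm : MeasurableSet D)
    (hDsub : D ⊆ Metric.closedBall z a)
    (f : EuclideanSpace ℝ (Fin 3) → ℂ) (hf : Measurable f)
    (hfL2 : ∫⁻ y in D, (‖f y‖₊ : ℝ≥0∞) ^ 2 < ⊤) :
    ∫⁻ x in D, (‖∫ y in D, f y / ((4 * Real.pi * ‖x - y‖ ^ 2 : ℝ) : ℂ)‖₊ : ℝ≥0∞) ^ 2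
      ≤ ENNReal.ofReal (4 * a ^ 2) * ∫⁻ y in D, (‖f y‖₊ : ℝ≥0∞) ^ 2 := by
  set K : E3 → E3 → ℝ≥0∞ :=
    fun x y => ENNReal.ofReal (1 / (4 * Real.pi * ‖x - y‖ ^ 2)) with hK
  set n : E3 → ℝ≥0∞ := fun y => (‖f y‖₊ : ℝ≥0∞) with hn
  have hnm : Measurable n := hf.nnnorm.coe_nnreal_ennreal
  have hKm : Measurable (Function.uncurry K) := by
    have : Measurable fun p : E3 × E3 => 4 * Real.pi * ‖p.1 - p.2‖ ^ 2 :=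
      (((measurable_fst.sub measurable_snd).norm).pow_const 2).const_mul _
    simpa [Function.uncurry_def, hK, one_div] using this.inv.ennreal_ofReal
  have hKx : ∀ x, Measurable (K x) := by
    intro x
    have : Measurable fun y : E3 => 4 * Real.pi * ‖x - y‖ ^ 2 :=
      (((measurable_const.sub measurable_id).norm).pow_const 2).const_mul _
    simpa [hK, one_div] using this.inv.ennreal_ofReal
  have hKy : ∀ y, Measurable fun x => K x y := by
    intro y
    have : Measurable fun x : E3 => 4 * Real.pi * ‖x - y‖ ^ 2 :=
      (((measurable_id.sub measurable_const).norm).pow_const 2).const_mul _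
    simpa [hK, one_div] using this.inv.ennreal_ofReal
  have h2a : (0:ℝ) ≤ 2 * a := by linarith
  have hDball : ∀ x ∈ D, D ⊆ Metric.closedBall x (2 * a) := by
    intro x hx y hy
    have h1 := Metric.mem_closedBall.1 (hDsub hx)
    have h2 := Metric.mem_closedBall.1 (hDsub hy)
    have : dist y x ≤ dist y z + dist z x := dist_triangle _ _ _
    rw [Metric.mem_closedBall]
    rw [dist_comm z x] at this
    linarith
  have hrow : ∀ x ∈ D, ∫⁻ y in D, K x y ≤ ENNReal.ofReal (2 * a) := fun x hx =>
    aux_ball (2 * a) h2a x D (hDball x hx)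
  have hcol : ∀ y ∈ D, ∫⁻ x in D, K x y ≤ ENNReal.ofReal (2 * a) := by
    intro y hy
    have hsymm : ∀ x : E3, K x y = ENNReal.ofReal (1 / (4 * Real.pi * ‖y - x‖ ^ 2)) :=
      fun x => by rw [hK]; rw [norm_sub_rev]
    simp_rw [hsymm]
    exact aux_ball (2 * a) h2a y D (hDball y hy)
  have hsqrt : ∀ x : ℝ≥0∞, (x ^ (1/2 : ℝ)) ^ (2:ℕ) = x := fun x => by
    rw [← ENNReal.rpow_natCast (x ^ (1/2:ℝ)) 2, ← ENNReal.rpow_mul]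
    norm_num
  have hpoint : ∀ x : E3,
      (‖∫ y in D, f y / ((4 * Real.pi * ‖x - y‖ ^ 2 : ℝ) : ℂ)‖₊ : ℝ≥0∞) ^ 2
        ≤ (∫⁻ y in D, K x y) * (∫⁻ y in D, K x y * n y ^ 2) := by
    intro x
    have hid : ∀ y : E3, (‖f y / ((4 * Real.pi * ‖x - y‖ ^ 2 : ℝ) : ℂ)‖₊ : ℝ≥0∞)
        = K x y ^ (1/2:ℝ) * (K x y ^ (1/2:ℝ) * n y) := by
      intro y
      have hc : (0:ℝ) ≤ 4 * Real.pi * ‖x - y‖ ^ 2 := by positivity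
      have e1 : f y / ((4 * Real.pi * ‖x - y‖ ^ 2 : ℝ) : ℂ)
          = f y * ((1 / (4 * Real.pi * ‖x - y‖ ^ 2) : ℝ) : ℂ) := by
        push_cast
        ring
      rw [e1, nnnorm_mul, ENNReal.coe_mul, Complex.nnnorm_real,
        show ((‖(1 / (4 * Real.pi * ‖x - y‖ ^ 2) : ℝ)‖₊ : ℝ≥0∞)) = ENNReal.ofReal (1 / (4 * Real.pi * ‖x - y‖ ^ 2)) from Real.enorm_eq_ofReal (by positivity)]
      have hrhs : K x y ^ (1/2:ℝ) * (K x y ^ (1/2:ℝ) * n y) = K x y * n y := by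
        rw [← mul_assoc, ← pow_two, hsqrt]
      rw [hrhs, hK, hn, mul_comm]
    have hb : (‖∫ y in D, f y / ((4 * Real.pi * ‖x - y‖ ^ 2 : ℝ) : ℂ)‖₊ : ℝ≥0∞)
        ≤ ∫⁻ y in D, K x y ^ (1/2:ℝ) * (K x y ^ (1/2:ℝ) * n y) := by
      refine (enorm_integral_le_lintegral_enorm _).trans ?_
      exact le_of_eq (lintegral_congr fun y => hid y)
    have hKhalf : Measurable fun y => K x y ^ (1/2:ℝ) :=
      ENNReal.continuous_rpow_const.measurable.comp (hKx x)
    have hcs := aux_CS (volume.restrict D) hKhalf.aemeasurable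
      (hKhalf.mul hnm).aemeasurable
    calc (‖∫ y in D, f y / ((4 * Real.pi * ‖x - y‖ ^ 2 : ℝ) : ℂ)‖₊ : ℝ≥0∞) ^ 2
        ≤ (∫⁻ y in D, K x y ^ (1/2:ℝ) * (K x y ^ (1/2:ℝ) * n y)) ^ 2 :=
          pow_le_pow_left' hb 2
      _ ≤ (∫⁻ y in D, (K x y ^ (1/2:ℝ)) ^ 2) * (∫⁻ y in D, (K x y ^ (1/2:ℝ) * n y) ^ 2) :=
          hcs
      _ = (∫⁻ y in D, K x y) * (∫⁻ y in D, K x y * n y ^ 2) := by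
          congr 1
          · exact lintegral_congr fun y => hsqrt _
          · refine lintegral_congr fun y => ?_
            rw [mul_pow, hsqrt]
  have hB : Measurable fun x => ∫⁻ y in D, K x y * n y ^ 2 := by
    refine Measurable.lintegral_prod_right ?_
    exact hKm.mul ((hnm.pow_const 2).comp measurable_snd)
  calc ∫⁻ x in D, (‖∫ y in D, f y / ((4 * Real.pi * ‖x - y‖ ^ 2 : ℝ) : ℂ)‖₊ : ℝ≥0∞) ^ 2
      ≤ ∫⁻ x in D, ENNReal.ofReal (2 * a) * ∫⁻ y in D, K x y * n y ^ 2 := by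
        refine setLIntegral_mono (hB.const_mul _) fun x hx => ?_
        exact (hpoint x).trans (mul_le_mul_left (hrow x hx) _)
    _ = ENNReal.ofReal (2 * a) * ∫⁻ x in D, ∫⁻ y in D, K x y * n y ^ 2 :=
        lintegral_const_mul _ hB
    _ = ENNReal.ofReal (2 * a) * ∫⁻ y in D, ∫⁻ x in D, K x y * n y ^ 2 := by
        rw [lintegral_lintegral_swap]
        exact (hKm.mul ((hnm.pow_const 2).comp measurable_snd)).aemeasurable
    _ = ENNReal.ofReal (2 * a) * ∫⁻ y in D, (∫⁻ x in D, K x y) * n y ^ 2 := by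
        congr 1
        refine lintegral_congr fun y => ?_
        exact lintegral_mul_const _ (hKy y)
    _ ≤ ENNReal.ofReal (2 * a) * ∫⁻ y in D, ENNReal.ofReal (2 * a) * n y ^ 2 := by
        refine mul_le_mul_right ?_ _
        refine setLIntegral_mono ((hnm.pow_const 2).const_mul _) fun y hy => ?_
        exact mul_le_mul_left (hcol y hy) _
    _ = ENNReal.ofReal (2 * a) * (ENNReal.ofReal (2 * a) * ∫⁻ y in D, n y ^ 2) := by
        rw [lintegral_const_mul _ (hnm.pow_const 2)]
    _ = ENNReal.ofReal (4 * a ^ 2) * ∫⁻ y in D, (‖f y‖₊ : ℝ≥0∞) ^ 2 := by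
        rw [← mul_assoc, ← ENNReal.ofReal_mul h2a]
        rw [show (2 * a * (2 * a)) = 4 * a ^ 2 by ring]
end

section
/- Work in ℝ³ (the Euclidean space EuclideanSpace ℝ (Fin 3)). Let f : ℝ³ → ℝ be continuously differentiable with compact support and fix x ∈ ℝ³. For t > 0 let F(t) := ∫_{S(x,t)} f dσ be the integral of f over the sphere of center x and radius t with respect to 2-dimensional Hausdorff measure. Then the function t ↦ F(t)/t is differentiable on (0,∞), F(t)/t → 0 as t → 0⁺, and for every r > 0 one has r · ∫₀^r (d/dt)(F(t)/t) dt = F(r). -/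
set_option maxHeartbeats 1000000

open MeasureTheory
open scoped NNReal ENNReal Pointwise

namespace Stmt12Aux

noncomputable section

abbrev E3 := EuclideanSpace ℝ (Fin 3)

/-- The "graph" parametrization of a spherical cap. -/
def g (i : Fin 3) (ε : ℝ) (y : Fin 2 → ℝ) : E3 :=
  WithLp.toLp 2 (i.insertNth (ε * Real.sqrt (1 - (y 0 ^ 2 + y 1 ^ 2))) y)

def A : Set (Fin 2 → ℝ) := {y | y 0 ^ 2 + y 1 ^ 2 ≤ 2/3}

lemma sqrt_diff_le {a b : ℝ} (ha : 1/3 ≤ a) (hb : 1/3 ≤ b) :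
    |Real.sqrt a - Real.sqrt b| ≤ |a - b| := by
  have ha0 : (0:ℝ) ≤ a := by linarith
  have hb0 : (0:ℝ) ≤ b := by linarith
  have hsa : (1/2 : ℝ) ≤ Real.sqrt a := (Real.le_sqrt (by norm_num) ha0).2 (by nlinarith)
  have hsb : (1/2 : ℝ) ≤ Real.sqrt b := (Real.le_sqrt (by norm_num) hb0).2 (by nlinarith)
  have h2 : (Real.sqrt a - Real.sqrt b) * (Real.sqrt a + Real.sqrt b) = a - b := by
    have h3 := Real.sq_sqrt ha0
    have h4 := Real.sq_sqrt hb0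
    nlinarith [h3, h4]
  calc |Real.sqrt a - Real.sqrt b| = |Real.sqrt a - Real.sqrt b| * 1 := by ring
    _ ≤ |Real.sqrt a - Real.sqrt b| * (Real.sqrt a + Real.sqrt b) := by
        apply mul_le_mul_of_nonneg_left (by linarith) (abs_nonneg _)
    _ = |(Real.sqrt a - Real.sqrt b) * (Real.sqrt a + Real.sqrt b)| := by
        rw [abs_mul, abs_of_nonneg (by linarith : (0:ℝ) ≤ Real.sqrt a + Real.sqrt b)]
    _ = |a - b| := by rw [h2]

lemma lipschitz_g (i : Fin 3) (ε : ℝ) (hε : |ε| = 1) :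
    LipschitzOnWith 5 (g i ε) A := by
  rw [lipschitzOnWith_iff_dist_le_mul]
  intro y hy z hz
  set d := dist y z with hd
  have hd0 : (0:ℝ) ≤ d := dist_nonneg
  have hk : ∀ k : Fin 2, |y k - z k| ≤ d := fun k => by
    rw [hd, ← Real.dist_eq]; exact dist_le_pi_dist y z k
  have hyA : y 0 ^ 2 + y 1 ^ 2 ≤ 2/3 := hy
  have hzA : z 0 ^ 2 + z 1 ^ 2 ≤ 2/3 := hz
  have hy0 : |y 0| ≤ 1 := abs_le.2 ⟨by nlinarith [sq_nonneg (y 1)], by nlinarith [sq_nonneg (y 1)]⟩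
  have hy1 : |y 1| ≤ 1 := abs_le.2 ⟨by nlinarith [sq_nonneg (y 0)], by nlinarith [sq_nonneg (y 0)]⟩
  have hz0 : |z 0| ≤ 1 := abs_le.2 ⟨by nlinarith [sq_nonneg (z 1)], by nlinarith [sq_nonneg (z 1)]⟩
  have hz1 : |z 1| ≤ 1 := abs_le.2 ⟨by nlinarith [sq_nonneg (z 0)], by nlinarith [sq_nonneg (z 0)]⟩
  set a := 1 - (y 0 ^ 2 + y 1 ^ 2) with hadef
  set b := 1 - (z 0 ^ 2 + z 1 ^ 2) with hbdef
  have hsq : |Real.sqrt a - Real.sqrt b| ≤ |a - b| :=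
    sqrt_diff_le (by rw [hadef]; linarith) (by rw [hbdef]; linarith)
  have hab : |a - b| ≤ 4 * d := by
    have h0 := abs_le.1 (hk 0)
    have h1 := abs_le.1 (hk 1)
    have hy0' := abs_le.1 hy0
    have hy1' := abs_le.1 hy1
    have hz0' := abs_le.1 hz0
    have hz1' := abs_le.1 hz1
    rw [hadef, hbdef, abs_le]
    constructor <;> nlinarith [h0.1, h0.2, h1.1, h1.2]
  -- bound the squared distance
  have hcomp : dist (g i ε y) (g i ε z) ^ 2 ≤ 25 * d ^ 2 := by
    have hde : dist (g i ε y) (g i ε z) =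
        Real.sqrt (∑ j, dist (g i ε y j) (g i ε z j) ^ 2) := EuclideanSpace.dist_eq _ _
    have hnn : (0:ℝ) ≤ ∑ j, dist (g i ε y j) (g i ε z j) ^ 2 :=
      Finset.sum_nonneg fun j _ => sq_nonneg _
    rw [hde, Real.sq_sqrt hnn]
    rw [Fin.sum_univ_succAbove (fun j => dist (g i ε y j) (g i ε z j) ^ 2) i]
    have hterm1 : dist (g i ε y i) (g i ε z i) ^ 2 ≤ 16 * d ^ 2 := by
      have e1 : g i ε y i = ε * Real.sqrt a := by
        rw [hadef]; exact Fin.insertNth_apply_same (α := fun _ => ℝ) i _ y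
      have e2 : g i ε z i = ε * Real.sqrt b := by
        rw [hbdef]; exact Fin.insertNth_apply_same (α := fun _ => ℝ) i _ z
      rw [e1, e2, Real.dist_eq]
      have : |ε * Real.sqrt a - ε * Real.sqrt b| = |Real.sqrt a - Real.sqrt b| := by
        rw [← mul_sub, abs_mul, hε, one_mul]
      rw [this]
      nlinarith [abs_nonneg (Real.sqrt a - Real.sqrt b), abs_nonneg (a - b)]
    have hterm2 : ∀ k : Fin 2,
        dist (g i ε y (i.succAbove k)) (g i ε z (i.succAbove k)) ^ 2 ≤ d ^ 2 := by
      intro k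
      have e1 : g i ε y (i.succAbove k) = y k := Fin.insertNth_apply_succAbove (α := fun _ => ℝ) i _ y k
      have e2 : g i ε z (i.succAbove k) = z k := Fin.insertNth_apply_succAbove (α := fun _ => ℝ) i _ z k
      rw [e1, e2, Real.dist_eq]
      nlinarith [hk k, abs_nonneg (y k - z k)]
    have h2 := hterm2 0
    have h3 := hterm2 1
    rw [Fin.sum_univ_two]
    nlinarith
  have : dist (g i ε y) (g i ε z) ≤ 5 * d := by
    nlinarith [dist_nonneg (x := g i ε y) (y := g i ε z)]
  simpa using this

lemma cover_sphere :
    Metric.sphere (0 : E3) 1 ⊆ ⋃ p : Fin 3 × Bool, g p.1 (if p.2 then 1 else -1) '' A := by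
  intro v hv
  have h1 : ‖v‖ = 1 := mem_sphere_zero_iff_norm.1 hv
  have h2 := EuclideanSpace.norm_eq v
  rw [h1] at h2
  have hnorm : ∑ j, v j ^ 2 = 1 := by
    have h3 : ∑ j, ‖v j‖ ^ 2 = 1 := Real.sqrt_eq_one.1 h2.symm
    simpa [Real.norm_eq_abs, sq_abs] using h3
  obtain ⟨i, hi⟩ : ∃ i, 1/3 ≤ v i ^ 2 := by
    by_contra h
    push_neg at h
    have h0 := h 0
    have h1' := h 1
    have h2' := h 2
    rw [Fin.sum_univ_three] at hnorm
    linarith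
  have hsum := Fin.sum_univ_succAbove (fun j => v j ^ 2) i
  rw [Fin.sum_univ_two, hnorm] at hsum
  refine Set.mem_iUnion.2 ⟨(i, decide (0 ≤ v i)), ⟨i.removeNth v, ?_, ?_⟩⟩
  · show i.removeNth v 0 ^ 2 + i.removeNth v 1 ^ 2 ≤ 2/3
    simp only [Fin.removeNth]
    linarith
  · have hval : 1 - (i.removeNth v 0 ^ 2 + i.removeNth v 1 ^ 2) = v i ^ 2 := by
      simp only [Fin.removeNth]
      linarith
    have hε' : (if (decide (0 ≤ v i) : Bool) then (1:ℝ) else -1) * |v i| = v i := by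
      by_cases h : 0 ≤ v i
      · simp [h, abs_of_nonneg h]
      · push_neg at h
        simp [not_le.2 h, abs_of_neg h]
    show g i _ (i.removeNth v) = v
    unfold g
    rw [hval, Real.sqrt_sq_eq_abs, hε', Fin.insertNth_self_removeNth]

lemma piece_lt_top (i : Fin 3) (ε : ℝ) (hε : |ε| = 1) : μH[2] (g i ε '' A) < ⊤ := by
  have h := (lipschitz_g i ε hε).hausdorffMeasure_image_le (show (0:ℝ) ≤ 2 by norm_num)
  refine lt_of_le_of_lt h ?_
  have hA : μH[(2:ℝ)] A = volume A := by
    have h2 : ((Fintype.card (Fin 2) : ℕ) : ℝ) = 2 := by simp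
    rw [← h2, hausdorffMeasure_pi_real]
  rw [hA]
  have hsub : A ⊆ Metric.closedBall (0 : Fin 2 → ℝ) 1 := by
    intro y hy
    have hyA : y 0 ^ 2 + y 1 ^ 2 ≤ 2/3 := hy
    rw [Metric.mem_closedBall, dist_pi_le_iff (by norm_num : (0:ℝ) ≤ 1)]
    intro k
    fin_cases k
    · show dist (y 0) ((0 : Fin 2 → ℝ) 0) ≤ 1
      rw [Real.dist_eq, show (0 : Fin 2 → ℝ) 0 = 0 from rfl, sub_zero]
      exact abs_le.2 ⟨by nlinarith [sq_nonneg (y 1)], by nlinarith [sq_nonneg (y 1)]⟩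
    · show dist (y 1) ((0 : Fin 2 → ℝ) 1) ≤ 1
      rw [Real.dist_eq, show (0 : Fin 2 → ℝ) 1 = 0 from rfl, sub_zero]
      exact abs_le.2 ⟨by nlinarith [sq_nonneg (y 0)], by nlinarith [sq_nonneg (y 0)]⟩
  refine ENNReal.mul_lt_top ?_ ?_
  · exact ENNReal.rpow_lt_top_of_nonneg (by norm_num) ENNReal.coe_ne_top
  · exact lt_of_le_of_lt (measure_mono hsub)
      (isCompact_closedBall _ _).measure_lt_top

lemma sphere_lt_top : μH[2] (Metric.sphere (0 : E3) 1) < ⊤ := by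
  refine lt_of_le_of_lt (measure_mono cover_sphere) ?_
  refine lt_of_le_of_lt (measure_iUnion_fintype_le _ _) ?_
  refine ENNReal.sum_lt_top.2 fun p _ => ?_
  exact piece_lt_top p.1 _ (by rcases p.2 <;> simp)

lemma restrict_sphere_eq (x : E3) {t : ℝ} (ht : 0 < t) :
    μH[2].restrict (Metric.sphere x t) =
      Measure.map (fun y : E3 => x + t • y)
        (ENNReal.ofReal (t ^ 2) • μH[2].restrict (Metric.sphere (0 : E3) 1)) := by
  have htne : t ≠ 0 := ht.ne'
  have hφm : Measurable (fun y : E3 => x + t • y) :=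
    (measurable_id.const_smul t).const_add x
  ext s hs
  rw [Measure.restrict_apply hs, Measure.map_apply hφm hs, Measure.smul_apply,
    Measure.restrict_apply (hφm hs)]
  have himg : (fun y : E3 => x + t • y) '' (Metric.sphere 0 1) = Metric.sphere x t := by
    ext z
    constructor
    · rintro ⟨y, hy, rfl⟩
      simp only [Metric.mem_sphere] at hy ⊢
      rw [dist_eq_norm]
      simp only [add_sub_cancel_left, norm_smul, Real.norm_eq_abs, abs_of_pos ht]
      rw [show dist y (0:E3) = ‖y‖ by simp [dist_eq_norm]] at hy
      rw [hy, mul_one]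
    · intro hz
      refine ⟨t⁻¹ • (z - x), ?_, ?_⟩
      · simp only [Metric.mem_sphere] at hz ⊢
        rw [show dist (t⁻¹ • (z - x)) (0:E3) = ‖t⁻¹ • (z - x)‖ by simp [dist_eq_norm]]
        rw [norm_smul, Real.norm_eq_abs, abs_of_pos (inv_pos.2 ht), ← dist_eq_norm, hz]
        field_simp
      · show x + t • t⁻¹ • (z - x) = z
        rw [smul_smul, mul_inv_cancel₀ htne, one_smul]
        abel
  have hset : s ∩ Metric.sphere x t =
      (fun y : E3 => x + t • y) '' ((fun y : E3 => x + t • y) ⁻¹' s ∩ Metric.sphere 0 1) := by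
    rw [Set.inter_comm ((fun y : E3 => x + t • y) ⁻¹' s), Set.image_inter_preimage, himg,
      Set.inter_comm]
  rw [hset]
  set B := (fun y : E3 => x + t • y) ⁻¹' s ∩ Metric.sphere (0 : E3) 1 with hB
  have h1 : (fun y : E3 => x + t • y) '' B = x +ᵥ (t • B) := by
    rw [← Set.image_vadd, ← Set.image_smul, ← Set.image_comp]
    rfl
  have h2 : μH[2] ((fun y : E3 => x + t • y) '' B) = (‖t‖₊ ^ (2:ℝ) : ℝ≥0) • μH[2] B := by
    rw [h1, MeasureTheory.hausdorffMeasure_vadd x (Or.inl (by norm_num)) _,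
      Measure.hausdorffMeasure_smul₀ (by norm_num) htne B]
  rw [h2]
  have h3 : ((‖t‖₊ ^ (2:ℝ) : ℝ≥0) : ℝ≥0∞) = ENNReal.ofReal (t ^ 2) := by
    rw [Real.nnnorm_of_nonneg ht.le, ENNReal.ofReal_pow ht.le]
    rw [show (2:ℝ) = ((2:ℕ):ℝ) by norm_num, NNReal.rpow_natCast]
    push_cast
    congr 2
    ext1
    simp [Real.toNNReal, ht.le]
  rw [← h3]
  rfl

lemma integral_sphere_eq (f : E3 → ℝ) (hf : Continuous f) (x : E3) {t : ℝ} (ht : 0 < t) :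
    ∫ y in Metric.sphere x t, f y ∂(μH[2]) =
      t ^ 2 * ∫ y in Metric.sphere (0 : E3) 1, f (x + t • y) ∂(μH[2]) := by
  rw [restrict_sphere_eq x ht,
    integral_map (by fun_prop) hf.aestronglyMeasurable, integral_smul_measure,
    ENNReal.toReal_ofReal (by positivity)]
  rfl

end

end Stmt12Aux

/-- For `f ∈ C¹_c(ℝ³)` and `F(t) := ∫_{S(x,t)} f dσ` (2-dimensional Hausdorff measure),
the map `t ↦ F(t)/t` is differentiable on `(0,∞)`, tends to `0` as `t → 0⁺`, and
`r ∫₀^r (d/dt)(F(t)/t) dt = F(r)` for every `r > 0`. -/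
theorem stmt12 (f : EuclideanSpace ℝ (Fin 3) → ℝ)
    (hf : ContDiff ℝ 1 f) (hsupp : HasCompactSupport f)
    (x : EuclideanSpace ℝ (Fin 3))
    (F : ℝ → ℝ) (hF : ∀ t : ℝ, F t = ∫ y in Metric.sphere x t, f y ∂(μH[2])) :
    (∀ t ∈ Set.Ioi (0 : ℝ), DifferentiableAt ℝ (fun s : ℝ => F s / s) t) ∧
    Filter.Tendsto (fun t : ℝ => F t / t) (nhdsWithin 0 (Set.Ioi 0)) (nhds 0) ∧
    ∀ r > (0 : ℝ), r * ∫ t in (0 : ℝ)..r, deriv (fun s : ℝ => F s / s) t = F r := by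
  classical
  set ν : Measure (EuclideanSpace ℝ (Fin 3)) :=
    μH[2].restrict (Metric.sphere (0 : EuclideanSpace ℝ (Fin 3)) 1) with hν
  haveI : IsFiniteMeasure ν :=
    ⟨by rw [hν, Measure.restrict_apply_univ]; exact Stmt12Aux.sphere_lt_top⟩
  obtain ⟨L, hL⟩ := hf.lipschitzWith_of_hasCompactSupport hsupp one_ne_zero
  obtain ⟨M, hM⟩ := (hsupp.fderiv ℝ).exists_bound_of_continuous (hf.continuous_fderiv one_ne_zero)
  obtain ⟨C, hC⟩ := hsupp.exists_bound_of_continuous hf.continuous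
  have hcont : ∀ s : ℝ, Continuous fun y : EuclideanSpace ℝ (Fin 3) => x + s • y :=
    fun s => continuous_const.add (continuous_id.const_smul s)
  have hcont' : ∀ y : EuclideanSpace ℝ (Fin 3), Continuous fun s : ℝ => x + s • y :=
    fun y => continuous_const.add (continuous_id.smul continuous_const)
  set G : ℝ → ℝ := fun t => ∫ y, f (x + t • y) ∂ν with hG
  set G' : ℝ → ℝ := fun t => ∫ y, (fderiv ℝ f (x + t • y)) y ∂ν with hG'
  have hsph : ∀ᵐ y ∂ν, ‖y‖ = 1 := by
    rw [hν]
    filter_upwards [ae_restrict_mem Metric.isClosed_sphere.measurableSet] with y hy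
    simpa using hy
  have hfd : ∀ (t : ℝ) (y : EuclideanSpace ℝ (Fin 3)),
      HasDerivAt (fun s : ℝ => f (x + s • y)) ((fderiv ℝ f (x + t • y)) y) t := by
    intro t y
    have h1 : HasDerivAt (fun s : ℝ => x + s • y) y t := by
      simpa using ((hasDerivAt_id t).smul_const y).const_add x
    exact ((hf.differentiable one_ne_zero) (x + t • y)).hasFDerivAt.comp_hasDerivAt t h1
  have hF'meas : ∀ t : ℝ, AEStronglyMeasurable
      (fun y : EuclideanSpace ℝ (Fin 3) => (fderiv ℝ f (x + t • y)) y) ν :=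
    fun t => (((hf.continuous_fderiv one_ne_zero).comp (hcont t)).clm_apply continuous_id
      ).aestronglyMeasurable
  have hGd : ∀ t : ℝ, HasDerivAt G (G' t) t := by
    intro t
    refine (hasDerivAt_integral_of_dominated_loc_of_lip
      (F := fun s (y : EuclideanSpace ℝ (Fin 3)) => f (x + s • y))
      (F' := fun y => (fderiv ℝ f (x + t • y)) y) (μ := ν) (bound := fun _ => (L : ℝ))
      (x₀ := t) (Metric.ball_mem_nhds t zero_lt_one) ?_ ?_ (hF'meas t) ?_ (integrable_const _) ?_).2
    · filter_upwards with s
      exact (hf.continuous.comp (hcont s)).aestronglyMeasurable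
    · exact ⟨(hf.continuous.comp (hcont t)).aestronglyMeasurable,
        HasFiniteIntegral.of_bounded (C := C) (Filter.Eventually.of_forall fun y => hC _)⟩
    · filter_upwards [hsph] with y hy
      have h2 : LipschitzWith 1 (fun s : ℝ => x + s • y) := by
        refine LipschitzWith.of_dist_le_mul fun s u => ?_
        simp only [dist_eq_norm, add_sub_add_left_eq_sub, ← sub_smul, norm_smul, hy,
          Real.norm_eq_abs, mul_one]
        norm_num
      have h3 := (hL.comp h2).lipschitzOnWith (s := Metric.ball t 1)
      have h4 : Real.nnabs (L : ℝ) = L * 1 := by simp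
      rw [h4]
      exact h3
    · filter_upwards with y
      exact hfd t y
  have hGc : Continuous G := by
    rw [continuous_iff_continuousAt]
    exact fun t => (hGd t).continuousAt
  have hG'c : Continuous G' := by
    refine continuous_of_dominated (bound := fun _ => M) (fun t => hF'meas t) ?_
      (integrable_const _) ?_
    · intro t
      filter_upwards [hsph] with y hy
      calc ‖(fderiv ℝ f (x + t • y)) y‖ ≤ ‖fderiv ℝ f (x + t • y)‖ * ‖y‖ :=
            (fderiv ℝ f (x + t • y)).le_opNorm y
        _ ≤ M := by rw [hy, mul_one]; exact hM _
    · filter_upwards with y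
      have : Continuous fun t : ℝ => fderiv ℝ f (x + t • y) :=
        (hf.continuous_fderiv one_ne_zero).comp (hcont' y)
      exact this.clm_apply continuous_const
  -- the key scaling identity
  have hkey : ∀ t : ℝ, 0 < t → F t = t ^ 2 * G t := by
    intro t ht
    rw [hF t, Stmt12Aux.integral_sphere_eq f hf.continuous x ht, hG]
  set H : ℝ → ℝ := fun t => t * G t with hH
  have hHd : ∀ t : ℝ, HasDerivAt H (G t + t * G' t) t := by
    intro t
    exact ((hasDerivAt_id' (x := t)).mul (hGd t)).congr_deriv (by ring)
  have hkey2 : ∀ t : ℝ, 0 < t → F t / t = H t := by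
    intro t ht
    rw [hkey t ht, hH]
    field_simp
  have hEv : ∀ t : ℝ, 0 < t → (fun s : ℝ => F s / s) =ᶠ[nhds t] H := by
    intro t ht
    filter_upwards [IsOpen.mem_nhds isOpen_Ioi ht] with s hs
    exact hkey2 s hs
  refine ⟨?_, ?_, ?_⟩
  · intro t ht
    exact (hHd t).differentiableAt.congr_of_eventuallyEq (hEv t ht)
  · have h0 : Filter.Tendsto H (nhdsWithin 0 (Set.Ioi 0)) (nhds 0) := by
      have := ((continuous_id'.mul hGc).tendsto 0).mono_left
        (nhdsWithin_le_nhds (s := Set.Ioi (0:ℝ)))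
      exact (by simpa using this : Filter.Tendsto ((fun x : ℝ => x) * G) _ (nhds 0))
    refine h0.congr' ?_
    filter_upwards [self_mem_nhdsWithin] with s hs
    exact (hkey2 s hs).symm
  · intro r hr
    have hderiv_eq : Set.EqOn (deriv fun s : ℝ => F s / s) (deriv H) (Set.Ioc 0 r) := by
      intro t ht
      exact (hEv t ht.1).deriv_eq
    have hint : IntervalIntegrable (deriv H) volume 0 r := by
      have : deriv H = fun t => G t + t * G' t := funext fun t => (hHd t).deriv
      rw [this]
      exact (hGc.add (continuous_id.mul hG'c)).intervalIntegrable 0 r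
    have h1 : ∫ t in (0:ℝ)..r, deriv (fun s : ℝ => F s / s) t = ∫ t in (0:ℝ)..r, deriv H t := by
      rw [intervalIntegral.integral_of_le hr.le, intervalIntegral.integral_of_le hr.le]
      exact setIntegral_congr_fun measurableSet_Ioc hderiv_eq
    have h2 : ∫ t in (0:ℝ)..r, deriv H t = H r - H 0 :=
      intervalIntegral.integral_deriv_eq_sub (fun t _ => (hHd t).differentiableAt) hint
    rw [h1, h2]
    have : H 0 = 0 := by simp [hH]
    rw [this, sub_zero, hH]
    rw [hkey r hr]
    ring
end
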